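/- arXiv:2601.16622 — 4 statements merged into one kernel-verified Lean document; each statement's English description precedes it below -/
import Mathlib

section
/- The online softmax recurrence is correct: if μ^(k) = max(μ^(k-1), s_k) with μ^(0) = -∞, and z^(k) = z^(k-1)·exp(μ^(k-1) - μ^(k)) + exp(s_k - μ^(k)) with z^(0) = 0, then after processing all K scores, z^(K) = Σ_{k=1}^{K} exp(s_k - μ^(K)) where μ^(K) = max_k s_k. -/
open Finset

/-! Rescaling by `exp (μ k - μ (k + 1))` shifts every term
`exp (s j - μ k)` of the prefix sum to `exp (s j - μ (k + 1))`; this needs nothing about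
`μ`, so the sum identity holds for an arbitrary sequence of reference points. -/

theorem running_max_eq_sup'_Icc {α : Type*} [LinearOrder α] (s μ : ℕ → α) (hμ1 : μ 1 = s 1)
    (hμ : ∀ k, 1 ≤ k → μ (k + 1) = max (μ k) (s (k + 1))) {k : ℕ} (hk : 1 ≤ k) :
    μ k = (Icc 1 k).sup' (nonempty_Icc.mpr hk) s := by
  induction k, hk using Nat.le_induction with
  | base => simp [hμ1]
  | succ k hk ih =>
    rw [sup'_congr _ (insert_Icc_right_eq_Icc_add_one (by omega)).symm fun _ _ => rfl,
      sup'_insert, hμ k hk, ih, max_comm]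

theorem rescaled_normalizer_eq_sum_exp (s μ z : ℕ → ℝ) (hz1 : z 1 = Real.exp (s 1 - μ 1))
    (hz : ∀ k, 1 ≤ k →
      z (k + 1) = z k * Real.exp (μ k - μ (k + 1)) + Real.exp (s (k + 1) - μ (k + 1)))
    {k : ℕ} (hk : 1 ≤ k) :
    z k = ∑ j ∈ Icc 1 k, Real.exp (s j - μ k) := by
  induction k, hk using Nat.le_induction with
  | base => simp [hz1]
  | succ k hk ih =>
    have hshift (j : ℕ) :
        Real.exp (s j - μ k) * Real.exp (μ k - μ (k + 1)) = Real.exp (s j - μ (k + 1)) := by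
      rw [← Real.exp_add, sub_add_sub_cancel]
    rw [sum_Icc_succ_top (by omega), hz k hk, ih, sum_mul]
    simp only [hshift]

/-- Correctness of the online softmax recurrence: the running maximum equals the
maximum of the scores seen so far and the streaming normalizer equals the exact
(stabilized) softmax denominator. The base case `μ⁰ = -∞`, `z⁰ = 0` is treated
separately by the initialization at `k = 1`. -/
theorem online_softmax_normalizer_correct
    (K : ℕ) (hK : 1 ≤ K) (s μ z : ℕ → ℝ)
    (hμ1 : μ 1 = s 1) (hz1 : z 1 = 1)
    (hμ : ∀ k, 1 ≤ k → μ (k + 1) = max (μ k) (s (k + 1)))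
    (hz : ∀ k, 1 ≤ k →
      z (k + 1) = z k * Real.exp (μ k - μ (k + 1)) + Real.exp (s (k + 1) - μ (k + 1))) :
    μ K = (Finset.Icc 1 K).sup' (Finset.nonempty_Icc.mpr hK) s ∧
      z K = ∑ j ∈ Finset.Icc 1 K, Real.exp (s j - μ K) := by
  have hz1_exp : z 1 = Real.exp (s 1 - μ 1) := by rw [hz1, hμ1, sub_self, Real.exp_zero]
  exact ⟨running_max_eq_sup'_Icc s μ hμ1 hμ hK, rescaled_normalizer_eq_sum_exp s μ z hz1_exp hz hK⟩
end

section
/- The online value accumulator recurrence is correct: with A^(0) = 0 and A^(k) = A^(k-1)·exp(μ^(k-1) - μ^(k)) + exp(s_k - μ^(k))·v_k, the final normalized output A^(K)/z^(K) equals the softmax-weighted average Σ_k softmax(s)_k · v_k, where softmax(s)_k = exp(s_k)/Σ_j exp(s_j). -/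
open Finset

/-- Correctness of the online value accumulator: the final normalized output
`A^(K) / z^(K)` equals the softmax-weighted average of the values. The base case
`μ⁰ = -∞`, `z⁰ = 0`, `A⁰ = 0` is handled by the initialization at `k = 1`. -/
theorem online_softmax_accumulator_correct
    (K C : ℕ) (hK : 1 ≤ K) (s μ z : ℕ → ℝ) (v A : ℕ → (Fin C → ℝ))
    (hμ1 : μ 1 = s 1) (hz1 : z 1 = 1) (hA1 : A 1 = v 1)
    (hμ : ∀ k, 1 ≤ k → μ (k + 1) = max (μ k) (s (k + 1)))
    (hz : ∀ k, 1 ≤ k →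
      z (k + 1) = z k * Real.exp (μ k - μ (k + 1)) + Real.exp (s (k + 1) - μ (k + 1)))
    (hA : ∀ k, 1 ≤ k →
      A (k + 1) = Real.exp (μ k - μ (k + 1)) • A k
        + Real.exp (s (k + 1) - μ (k + 1)) • v (k + 1)) :
    (z K)⁻¹ • A K =
      ∑ j ∈ Finset.Icc 1 K,
        (Real.exp (s j) / ∑ m ∈ Finset.Icc 1 K, Real.exp (s m)) • v j := by
  have key : ∀ k, 1 ≤ k →
      z k = ∑ j ∈ Finset.Icc 1 k, Real.exp (s j - μ k) ∧
      A k = ∑ j ∈ Finset.Icc 1 k, Real.exp (s j - μ k) • v j := by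
    intro k hk
    induction k with
    | zero => omega
    | succ n ih =>
      rcases Nat.eq_or_lt_of_le hk with h1 | h1
      · simp [← h1, hz1, hA1, hμ1]
      · have hn : 1 ≤ n := by omega
        obtain ⟨ihz, ihA⟩ := ih hn
        have hins : Finset.Icc 1 (n + 1) = insert (n + 1) (Finset.Icc 1 n) := by
          ext x; simp [Finset.mem_Icc]; omega
        constructor
        · rw [hz n hn, ihz, hins, Finset.sum_insert (by simp), Finset.sum_mul]
          rw [add_comm]
          congr 1
          apply Finset.sum_congr rfl
          intro j _
          rw [← Real.exp_add]
          ring_nf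
        · rw [hA n hn, ihA, hins, Finset.sum_insert (by simp), Finset.smul_sum]
          rw [add_comm]
          congr 1
          apply Finset.sum_congr rfl
          intro j _
          rw [smul_smul, ← Real.exp_add]
          ring_nf
  obtain ⟨hzK, hAK⟩ := key K hK
  have hS : (0:ℝ) < ∑ m ∈ Finset.Icc 1 K, Real.exp (s m) :=
    Finset.sum_pos (fun m _ => Real.exp_pos _) (by simp [hK])
  have hzval : z K = (∑ m ∈ Finset.Icc 1 K, Real.exp (s m)) * Real.exp (-(μ K)) := by
    rw [hzK, Finset.sum_mul]
    exact Finset.sum_congr rfl fun j _ => by rw [← Real.exp_add]; ring_nf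
  rw [hAK, hzval, Finset.smul_sum]
  apply Finset.sum_congr rfl
  intro j _
  rw [smul_smul]
  congr 1
  rw [Real.exp_sub]
  have h1 := Real.exp_pos (μ K)
  have h2 := Real.exp_pos (-(μ K))
  rw [Real.exp_neg]
  field_simp
end

section
/- The loop invariant of online softmax holds: at every step k, z^(k) = Σ_{j=1}^{k} exp(s_j - μ^(k)) and A^(k) = Σ_{j=1}^{k} exp(s_j - μ^(k))·v_j, where μ^(k) = max_{1≤j≤k} s_j. -/
open Finset Real

/-! Each update multiplies the old accumulators by `exp (μ^(k-1) - μ^(k))`, which moves the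
reference point of every exponent `s_j - μ^(k-1)` to `s_j - μ^(k)`; the new term then supplies the
summand `j = k`. -/

theorem exp_sub_smul_sum_exp_sub_smul {ι M : Type*} [AddCommMonoid M] [Module ℝ M]
    (s : ι → ℝ) (v : ι → M) (t : Finset ι) (m m' : ℝ) :
    exp (m - m') • ∑ j ∈ t, exp (s j - m) • v j = ∑ j ∈ t, exp (s j - m') • v j := by
  rw [smul_sum]
  refine sum_congr rfl fun j _ => ?_
  rw [smul_smul, ← exp_add, add_comm, sub_add_sub_cancel]

theorem sum_exp_sub_mul_exp_sub {ι : Type*} (s : ι → ℝ) (t : Finset ι) (m m' : ℝ) :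
    (∑ j ∈ t, exp (s j - m)) * exp (m - m') = ∑ j ∈ t, exp (s j - m') := by
  simpa [mul_comm] using exp_sub_smul_sum_exp_sub_smul s (fun _ => (1 : ℝ)) t m m'

theorem Icc_one_add_one_eq_insert {k : ℕ} (hk : 1 ≤ k) : Icc 1 (k + 1) = insert (k + 1) (Icc 1 k) :=
  (insert_Icc_right_eq_Icc_add_one (by omega)).symm

theorem sup'_Icc_one_add_one {α : Type*} [LinearOrder α] (s : ℕ → α) {k : ℕ} (hk : 1 ≤ k) :
    (Icc 1 (k + 1)).sup' (nonempty_Icc.2 (by omega)) s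
      = max ((Icc 1 k).sup' (nonempty_Icc.2 hk) s) (s (k + 1)) := by
  rw [sup'_congr _ (Icc_one_add_one_eq_insert hk) fun _ _ => rfl, sup'_insert, max_comm]

theorem online_softmax_loop_invariant_general
    (K C : ℕ) (s μ z : ℕ → ℝ) (v A : ℕ → (Fin C → ℝ))
    (hμ1 : μ 1 = s 1) (hz1 : z 1 = 1) (hA1 : A 1 = v 1)
    (hμ : ∀ k, 1 ≤ k → μ (k + 1) = max (μ k) (s (k + 1)))
    (hz : ∀ k, 1 ≤ k →
      z (k + 1) = z k * Real.exp (μ k - μ (k + 1)) + Real.exp (s (k + 1) - μ (k + 1)))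
    (hA : ∀ k, 1 ≤ k →
      A (k + 1) = Real.exp (μ k - μ (k + 1)) • A k
        + Real.exp (s (k + 1) - μ (k + 1)) • v (k + 1)) :
    ∀ k, 1 ≤ k → k ≤ K →
      (∃ hne : (Finset.Icc 1 k).Nonempty, μ k = (Finset.Icc 1 k).sup' hne s) ∧
      z k = ∑ j ∈ Finset.Icc 1 k, Real.exp (s j - μ k) ∧
      A k = ∑ j ∈ Finset.Icc 1 k, Real.exp (s j - μ k) • v j := by
  intro k hk _
  induction k, hk using Nat.le_induction with
  | base => exact ⟨⟨nonempty_Icc.2 le_rfl, by simp [hμ1]⟩, by simp [hz1, hμ1], by simp [hA1, hμ1]⟩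
  | succ k hk ih =>
    obtain ⟨⟨_, hμk⟩, hzk, hAk⟩ := ih (by omega)
    have hnew : k + 1 ∉ Icc 1 k := by simp
    refine ⟨⟨nonempty_Icc.2 (by omega), ?_⟩, ?_, ?_⟩
    · rw [hμ k hk, hμk, sup'_Icc_one_add_one s hk]
    · rw [hz k hk, hzk, sum_exp_sub_mul_exp_sub, Icc_one_add_one_eq_insert hk,
        sum_insert hnew, add_comm]
    · rw [hA k hk, hAk, exp_sub_smul_sum_exp_sub_smul, Icc_one_add_one_eq_insert hk,
        sum_insert hnew, add_comm]

/-- Loop invariant of online softmax: at every step `k` (for `1 ≤ k ≤ K`),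
`μ^(k) = max_{1 ≤ j ≤ k} s_j`, `z^(k) = Σ_{j=1}^k exp(s_j - μ^(k))`, and
`A^(k) = Σ_{j=1}^k exp(s_j - μ^(k)) • v_j`. -/
theorem online_softmax_loop_invariant
    (K C : ℕ) (hK : 1 ≤ K) (s μ z : ℕ → ℝ) (v A : ℕ → (Fin C → ℝ))
    (hμ1 : μ 1 = s 1) (hz1 : z 1 = 1) (hA1 : A 1 = v 1)
    (hμ : ∀ k, 1 ≤ k → μ (k + 1) = max (μ k) (s (k + 1)))
    (hz : ∀ k, 1 ≤ k →
      z (k + 1) = z k * Real.exp (μ k - μ (k + 1)) + Real.exp (s (k + 1) - μ (k + 1)))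
    (hA : ∀ k, 1 ≤ k →
      A (k + 1) = Real.exp (μ k - μ (k + 1)) • A k
        + Real.exp (s (k + 1) - μ (k + 1)) • v (k + 1)) :
    ∀ k, 1 ≤ k → k ≤ K →
      (∃ hne : (Finset.Icc 1 k).Nonempty, μ k = (Finset.Icc 1 k).sup' hne s) ∧
      z k = ∑ j ∈ Finset.Icc 1 k, Real.exp (s j - μ k) ∧
      A k = ∑ j ∈ Finset.Icc 1 k, Real.exp (s j - μ k) • v j :=
  online_softmax_loop_invariant_general K C s μ z v A hμ1 hz1 hA1 hμ hz hA
end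

section
/- Under the alignment rotation, the equivariant tensor product with the geometric encoding reduces to a single-index contraction: if R aligns the z-axis with r̂ so that D_R^{(ℓ_f)} R^{(ℓ_f)}(r) = c·e_0 for a scalar c, then (h^{(ℓ_i)} ⊗ R^{(ℓ_f)}(r))^{(ℓ_o)}_{m_o} = [D_{R^{-1}}^{(ℓ_o)} y]_{m_o}, where y_{m_o} = c · Σ_{m_i} C^{(ℓ_o,m_o)}_{(ℓ_i,m_i),(ℓ_f,0)} (D_R^{(ℓ_i)} h)_{m_i}. -/
open Matrix Finset

/-! Applying `Do` to the tensor product, the intertwining property moves the rotation onto the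
factors; pole sparsity then collapses the sum over `m_f` to the single index `ℓf` (which encodes
`m_f = 0`), and `Doᵀ` undoes `Do`. -/

theorem Matrix.eq_mulVec_mulVec_of_mul_eq_one {m n R : Type*} [Fintype m] [Fintype n]
    [DecidableEq n] [CommSemiring R] {A : Matrix m n R} {B : Matrix n m R} (hBA : B * A = 1)
    (v : n → R) : v = B *ᵥ (A *ᵥ v) := by
  rw [mulVec_mulVec, hBA, one_mulVec]

theorem Fin.ite_val_eq_pi_single {R : Type*} [Zero R] {n k : ℕ} (hk : k < n) (c : R) :
    (fun j : Fin n => if (j : ℕ) = k then c else 0) = Pi.single ⟨k, hk⟩ c := by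
  funext j
  simp [Pi.single_apply, Fin.ext_iff]

theorem Finset.sum_sum_mul_mul_pi_single {ι κ R : Type*} [Fintype ι] [Fintype κ] [DecidableEq κ]
    [CommSemiring R] (C : ι → κ → R) (u : ι → R) (k : κ) (c : R) :
    ∑ i, ∑ j, C i j * u i * (Pi.single k c : κ → R) j = c * ∑ i, C i k * u i := by
  simp only [Pi.single_apply, mul_ite, mul_zero, Finset.sum_ite_eq', Finset.mem_univ, if_true,
    Finset.mul_sum]
  exact Finset.sum_congr rfl fun _ _ => by ring

/-- Under the alignment rotation, the equivariant (Clebsch–Gordan) tensor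
product with the geometric encoding reduces to a single-index contraction.
Here `tp u v = Σ_{m_i,m_f} C^{(ℓ_o,m_o)}_{(ℓ_i,m_i),(ℓ_f,m_f)} u_{m_i} v_{m_f}`
with Wigner-D matrices `Di, Df, Do` for the aligning rotation `R`, the
intertwining property, pole sparsity `Df (R^{(ℓ_f)}(r)) = c • e₀`, and the
orthogonality `Doᵀ Do = 1` (so `Doᵀ` represents `R⁻¹`). -/
theorem aligned_tensor_product_reduction
    (ℓi ℓf ℓo : ℕ)
    (C : Fin (2 * ℓo + 1) → Fin (2 * ℓi + 1) → Fin (2 * ℓf + 1) → ℝ)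
    (Di : Matrix (Fin (2 * ℓi + 1)) (Fin (2 * ℓi + 1)) ℝ)
    (Df : Matrix (Fin (2 * ℓf + 1)) (Fin (2 * ℓf + 1)) ℝ)
    (Do : Matrix (Fin (2 * ℓo + 1)) (Fin (2 * ℓo + 1)) ℝ)
    (hDo : Doᵀ * Do = 1)
    (tp : (Fin (2 * ℓi + 1) → ℝ) → (Fin (2 * ℓf + 1) → ℝ) → (Fin (2 * ℓo + 1) → ℝ))
    (htp : ∀ u v, tp u v = fun mo => ∑ mi, ∑ mf, C mo mi mf * u mi * v mf)
    (hintertwine : ∀ u v, Do.mulVec (tp u v) = tp (Di.mulVec u) (Df.mulVec v))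
    (h : Fin (2 * ℓi + 1) → ℝ)   -- node features h^{(ℓ_i)}
    (Rf : Fin (2 * ℓf + 1) → ℝ)  -- geometric encoding R^{(ℓ_f)}(r)
    (c : ℝ)
    (hsparse : Df.mulVec Rf = fun mf : Fin (2 * ℓf + 1) => if (mf : ℕ) = ℓf then c else 0) :
    tp h Rf =
      Doᵀ.mulVec (fun mo =>
        c * ∑ mi, C mo mi (⟨ℓf, by omega⟩ : Fin (2 * ℓf + 1)) * (Di.mulVec h) mi) := by
  have hk : ℓf < 2 * ℓf + 1 := by omega
  have hpole : Df *ᵥ Rf = Pi.single ⟨ℓf, hk⟩ c := hsparse.trans (Fin.ite_val_eq_pi_single hk c)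
  have aligned : Do *ᵥ tp h Rf = fun mo => c * ∑ mi, C mo mi ⟨ℓf, hk⟩ * (Di *ᵥ h) mi := by
    rw [hintertwine, hpole, htp]
    funext mo
    exact Finset.sum_sum_mul_mul_pi_single (C mo) (Di *ᵥ h) _ c
  exact (eq_mulVec_mulVec_of_mul_eq_one hDo _).trans (congrArg _ aligned)
end
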